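/- There is an absolute constant c₀ such that the following holds for all c ≥ c₀. Let n ≥ 2, let α ∈ (0,1], ε > 0, and let k with 1 < k ≤ n be an integer with e^{−k} < α, let L ≥ ln n be a positive integer, and suppose m1 := (c/64)k² and m2 := (c/α^{2+ε})k² are positive integers. Let X = (X_r)_{0 ≤ r < t}, with t ≥ (m2+1)·L, have independent {0,1}-valued coordinates with P(X_r = 1) = p(r) = 1/√(⌊r/L⌋+1). Let Y⊤ = ∑_{r=0}^{m1·L − 1} X_r and Y⊥ = ∑_{r=m1·L}^{(m2+1)·L − 1} X_r. Then the probability that the Weight Inequality fails, i.e., P(Y⊤ > α·Y⊥), is at most (2/c²)·n^{−8·ln(4/α)}. -/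

import Mathlib

/-!
Chernoff's method. Let `A` and `B` be the expected weights of the upper and lower segments.
Tilting the coordinates by `λ` above and by `-αλ` below, independence and `1 + x ≤ eˣ` bound the
failure probability by `exp (A (e^λ - 1) + B (e^{-αλ} - 1))`; for `λ = log (αB / 2A)`, convexity
of `exp` makes this at most `exp (-αB/6)` as soon as `αB ≥ 6A`. Summing `p` block by block,
`A ≤ 2L√m₁ = L√c k/4`, while `α²m₂ ≥ c k²` gives `αB ≥ 2Lα√m₂ - 2L - A ≥ (7/4) L√c k - 2L`.
So `αB/6` grows like `L√c k`, which beats `8 log(4/α) log n + 2 log c ≤ 14 kL + 8 c^{1/4}`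
once `c ≥ 10⁶`.
-/

open MeasureTheory

/-- Probability of a one at position `r` in the random matrix construction with block
length `L`: `p(r) = 1/√(⌊r/L⌋+1)` (natural-number division is floor division). -/
noncomputable def pval (L r : ℕ) : ℝ := 1 / Real.sqrt (((r / L : ℕ) : ℝ) + 1)

/-- The Bernoulli measure on `Bool` with parameter `p`. -/
noncomputable def bern (p : ℝ) : Measure Bool :=
  ENNReal.ofReal p • Measure.dirac true + ENNReal.ofReal (1 - p) • Measure.dirac false

open Real Finset ProbabilityTheory

lemma pval_pos (L r : ℕ) : 0 < pval L r := by
  unfold pval; positivity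

lemma pval_le_one (L r : ℕ) : pval L r ≤ 1 := by
  rw [pval, div_le_one (by positivity), one_le_sqrt]
  linarith [(r / L).cast_nonneg (α := ℝ)]

instance (p : ℝ) : IsFiniteMeasure (bern p) := ⟨by simp [bern]⟩

lemma integral_bern {p : ℝ} (hp0 : 0 ≤ p) (hp1 : p ≤ 1) (f : Bool → ℝ) :
    ∫ b, f b ∂bern p = p * f true + (1 - p) * f false := by
  rw [integral_fintype .of_finite, Fintype.sum_bool]
  simp [bern, measureReal_def, hp0, hp1]

lemma measure_pi_bern_sum_nonneg_le {ι : Type*} [Fintype ι] {p : ι → ℝ}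
    (hp0 : ∀ i, 0 ≤ p i) (hp1 : ∀ i, p i ≤ 1) (φ : ι → ℝ) :
    Measure.pi (fun i => bern (p i)) {ω | 0 ≤ ∑ i, if ω i then φ i else 0}
      ≤ ENNReal.ofReal (exp (∑ i, p i * (exp (φ i) - 1))) := by
  rw [← ofReal_measureReal]
  refine ENNReal.ofReal_le_ofReal ?_
  calc _ ≤ exp (-1 * 0) * mgf (fun ω : ι → Bool => ∑ i, if ω i then φ i else 0)
          (Measure.pi fun i => bern (p i)) 1 :=
        measure_ge_le_exp_mul_mgf 0 zero_le_one .of_finite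
    _ = ∏ i, (1 + p i * (exp (φ i) - 1)) := by
        simp only [mgf, one_mul, mul_zero, exp_zero, exp_sum]
        rw [integral_fintype_prod_eq_prod (E := fun _ => Bool)
          fun i b => exp (if b then φ i else 0)]
        refine prod_congr rfl fun i _ => ?_
        rw [integral_bern (hp0 i) (hp1 i)]
        simp only [if_true, Bool.false_eq_true, if_false, exp_zero]
        ring
    _ ≤ ∏ i, exp (p i * (exp (φ i) - 1)) := by
        refine prod_le_prod (fun i _ => ?_) fun i _ => ?_
        · nlinarith [hp0 i, hp1 i, exp_pos (φ i)]
        · linarith [add_one_le_exp (p i * (exp (φ i) - 1))]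
    _ = _ := (exp_sum _ _).symm

lemma sum_mul_exp_piecewise_sub_one (p : ℕ → ℝ) {N₁ N₂ t : ℕ} (h₁₂ : N₁ ≤ N₂) (h₂ : N₂ ≤ t)
    (a b : ℝ) :
    ∑ r : Fin t, p r * (exp (if r.val < N₁ then a else if r.val < N₂ then b else 0) - 1)
      = (∑ r ∈ range N₁, p r) * (exp a - 1) + (∑ r ∈ Ico N₁ N₂, p r) * (exp b - 1) := by
  set f : ℕ → ℝ := fun r => p r * (exp (if r < N₁ then a else if r < N₂ then b else 0) - 1)
  rw [Fin.sum_univ_eq_sum_range f, ← sum_range_add_sum_Ico _ h₂, ← sum_range_add_sum_Ico _ h₁₂,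
    sum_mul, sum_mul]
  have hhigh : ∑ r ∈ Ico N₂ t, f r = 0 :=
    sum_eq_zero fun r hr => by
      rw [mem_Ico] at hr
      simp [f, show ¬ r < N₁ by omega, show ¬ r < N₂ by omega]
  rw [hhigh, add_zero]
  congr 1 <;> refine sum_congr rfl fun r hr => ?_ <;> simp only [f]
  · rw [if_pos (mem_range.1 hr)]
  · rw [mem_Ico] at hr
    rw [if_neg (by omega), if_pos hr.2]

lemma measure_pi_bern_weight_gt_le {p : ℕ → ℝ} (hp0 : ∀ r, 0 ≤ p r) (hp1 : ∀ r, p r ≤ 1)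
    {N₁ N₂ t : ℕ} (h₁₂ : N₁ ≤ N₂) (h₂ : N₂ ≤ t) {α l : ℝ} (hl : 0 ≤ l) :
    Measure.pi (fun r : Fin t => bern (p r))
        {ω | α * ∑ r : Fin t, (if N₁ ≤ r.val ∧ r.val < N₂ ∧ ω r = true then (1 : ℝ) else 0)
          < ∑ r : Fin t, (if r.val < N₁ ∧ ω r = true then (1 : ℝ) else 0)}
      ≤ ENNReal.ofReal (exp ((∑ r ∈ range N₁, p r) * (exp l - 1)
          + (∑ r ∈ Ico N₁ N₂, p r) * (exp (-(α * l)) - 1))) := by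
  set ψ : Fin t → ℝ := fun r => if r.val < N₁ then l else if r.val < N₂ then -(α * l) else 0
  have hsum (ω : Fin t → Bool) : ∑ r, (if ω r then ψ r else 0)
      = l * (∑ r : Fin t, (if r.val < N₁ ∧ ω r = true then (1 : ℝ) else 0)
        - α * ∑ r : Fin t, (if N₁ ≤ r.val ∧ r.val < N₂ ∧ ω r = true then (1 : ℝ) else 0)) := by
    rw [mul_sum, mul_sub, mul_sum, mul_sum, ← sum_sub_distrib]
    refine sum_congr rfl fun r _ => ?_
    cases ω r <;> simp only [ψ, Bool.false_eq_true, and_false, and_true, if_false, if_true] <;>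
      try split_ifs
    all_goals first | omega | ring
  calc _ ≤ Measure.pi (fun r : Fin t => bern (p r)) {ω | 0 ≤ ∑ r, if ω r then ψ r else 0} :=
        measure_mono fun ω hω => by
          simp only [Set.mem_ofPred_eq, hsum] at hω ⊢
          exact mul_nonneg hl (by linarith)
    _ ≤ _ := measure_pi_bern_sum_nonneg_le (p := fun r : Fin t => p r) (fun r => hp0 r)
          (fun r => hp1 r) ψ
    _ = _ := by rw [sum_mul_exp_piecewise_sub_one p h₁₂ h₂]

lemma exp_mul_le_one_sub_add_mul_exp {α : ℝ} (hα0 : 0 ≤ α) (hα1 : α ≤ 1) (x : ℝ) :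
    exp (α * x) ≤ 1 - α + α * exp x := by
  simpa using convexOn_exp.2 (Set.mem_univ 0) (Set.mem_univ x) (sub_nonneg.2 hα1) hα0 (by ring)

lemma exists_pos_tilt_le {A B α : ℝ} (hA : 0 < A) (hB : 0 ≤ B) (hα0 : 0 < α) (hα1 : α ≤ 1)
    (h : 6 * A ≤ α * B) :
    ∃ l > 0, A * (exp l - 1) + B * (exp (-(α * l)) - 1) ≤ -(α * B / 6) := by
  set R := α * B / (2 * A)
  have hR : 3 ≤ R := by rw [le_div_iff₀ (by positivity)]; linarith
  have hexp : exp (log R) = R := exp_log (by linarith)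
  refine ⟨log R, log_pos (by linarith), ?_⟩
  have hconv : exp (-(α * log R)) ≤ 1 - α + α / R := by
    have h := exp_mul_le_one_sub_add_mul_exp hα0.le hα1 (-log R)
    rwa [exp_neg, hexp, mul_neg, ← div_eq_mul_inv] at h
  have hAR : A * R = α * B / 2 := by simp only [R]; field_simp
  have hBR : α * B / R ≤ α * B / 3 := div_le_div_of_nonneg_left (by positivity) (by norm_num) hR
  calc A * (exp (log R) - 1) + B * (exp (-(α * log R)) - 1)
      ≤ A * (R - 1) + B * (α / R - α) := by
        rw [hexp]
        have := mul_le_mul_of_nonneg_left (by linarith : exp (-(α * log R)) - 1 ≤ α / R - α) hB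
        linarith
    _ = α * B / 2 - A + α * B / R - α * B := by rw [mul_sub, hAR]; ring
    _ ≤ -(α * B / 6) := by linarith

lemma sub_div_sqrt_le_two_mul_sqrt_sub {x y : ℝ} (hx : 0 ≤ x) (hxy : x ≤ y) :
    (y - x) / √y ≤ 2 * (√y - √x) := by
  rcases (sqrt_nonneg y).eq_or_lt with hy | hy
  · simp [← hy, show √x = 0 by linarith [sqrt_le_sqrt hxy, sqrt_nonneg x]]
  have hsq : y - x = (√y - √x) * (√y + √x) := by
    linear_combination sq_sqrt hx - sq_sqrt (hx.trans hxy)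
  rw [div_le_iff₀ hy, hsq]
  nlinarith [sqrt_le_sqrt hxy, sqrt_nonneg x]

lemma two_mul_sqrt_sub_le_sub_div_sqrt {x y : ℝ} (hx : 0 < x) (hxy : x ≤ y) :
    2 * (√y - √x) ≤ (y - x) / √x := by
  have hsq : y - x = (√y - √x) * (√y + √x) := by
    linear_combination sq_sqrt hx.le - sq_sqrt (hx.le.trans hxy)
  rw [le_div_iff₀ (sqrt_pos.2 hx), hsq]
  nlinarith [sqrt_le_sqrt hxy, sqrt_nonneg x]

lemma sum_range_one_div_sqrt_succ_le (m : ℕ) :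
    ∑ b ∈ range m, 1 / √((b : ℝ) + 1) ≤ 2 * √m := by
  calc ∑ b ∈ range m, 1 / √((b : ℝ) + 1)
      ≤ ∑ b ∈ range m, (2 * √((b + 1 : ℕ) : ℝ) - 2 * √(b : ℝ)) :=
        sum_le_sum fun b _ => by
          simpa [mul_sub] using sub_div_sqrt_le_two_mul_sqrt_sub (Nat.cast_nonneg b)
            (by linarith : (b : ℝ) ≤ b + 1)
    _ = 2 * √m := by rw [sum_range_sub (fun b => 2 * √(b : ℝ))]; simp

lemma two_mul_sqrt_succ_sub_one_le_sum_range (m : ℕ) :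
    2 * (√((m : ℝ) + 1) - 1) ≤ ∑ b ∈ range m, 1 / √((b : ℝ) + 1) := by
  calc 2 * (√((m : ℝ) + 1) - 1)
      = ∑ b ∈ range m, (2 * √(((b + 1 : ℕ) : ℝ) + 1) - 2 * √((b : ℝ) + 1)) := by
        rw [sum_range_sub (fun b => 2 * √((b : ℝ) + 1))]
        simp only [Nat.cast_zero, zero_add, sqrt_one]
        ring
    _ ≤ ∑ b ∈ range m, 1 / √((b : ℝ) + 1) :=
        sum_le_sum fun b _ => by
          have h := two_mul_sqrt_sub_le_sub_div_sqrt (by positivity : (0 : ℝ) < b + 1)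
            (by linarith : (b : ℝ) + 1 ≤ b + 1 + 1)
          push_cast
          simpa [mul_sub] using h

lemma sum_range_mul_pval {L : ℕ} (hL : 0 < L) (m : ℕ) :
    ∑ r ∈ range (m * L), pval L r = L * ∑ b ∈ range m, 1 / √((b : ℝ) + 1) := by
  induction m with
  | zero => simp
  | succ m ih =>
    have hblock : ∀ j ∈ range L, pval L (m * L + j) = 1 / √((m : ℝ) + 1) := fun j hj => by
      rw [pval, Nat.mul_comm, Nat.mul_add_div hL, Nat.div_eq_of_lt (mem_range.1 hj), add_zero]
    rw [Nat.succ_mul, sum_range_add, ih, sum_congr rfl hblock, sum_range_succ, sum_const,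
      card_range, nsmul_eq_mul]
    ring

lemma sum_range_mul_pval_le {L : ℕ} (hL : 0 < L) (m : ℕ) :
    ∑ r ∈ range (m * L), pval L r ≤ 2 * L * √m := by
  rw [sum_range_mul_pval hL, mul_comm 2, mul_assoc]
  exact mul_le_mul_of_nonneg_left (sum_range_one_div_sqrt_succ_le m) L.cast_nonneg

lemma le_sum_range_mul_pval {L : ℕ} (hL : 0 < L) (m : ℕ) :
    2 * L * (√((m : ℝ) + 1) - 1) ≤ ∑ r ∈ range (m * L), pval L r := by
  rw [sum_range_mul_pval hL, mul_comm 2, mul_assoc]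
  exact mul_le_mul_of_nonneg_left (two_mul_sqrt_succ_sub_one_le_sum_range m) L.cast_nonneg

lemma le_sq_mul_div_rpow {α ε x : ℝ} (hα0 : 0 < α) (hα1 : α ≤ 1) (hε : 0 ≤ ε) (hx : 0 ≤ x) :
    x ≤ α ^ 2 * (x / α ^ ((2 : ℝ) + ε)) := by
  have hpow : α ^ ((2 : ℝ) + ε) ≤ α ^ 2 := by
    simpa using rpow_le_rpow_of_exponent_ge hα0 hα1 (by linarith : (2 : ℝ) ≤ 2 + ε)
  rw [mul_div_assoc', le_div_iff₀ (rpow_pos_of_pos hα0 _)]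
  exact mul_le_mul_of_nonneg_left hpow hx |>.trans_eq (mul_comm _ _)

lemma sum_range_pval_le_of_eq {L m : ℕ} {c k : ℝ} (hL : 0 < L) (hc : 0 ≤ c) (hk : 0 ≤ k)
    (hm : (m : ℝ) = c / 64 * k ^ 2) :
    ∑ r ∈ range (m * L), pval L r ≤ L * √c * k / 4 := by
  have hsqrt : √(m : ℝ) = √c * k / 8 := by
    rw [hm, show c / 64 * k ^ 2 = (√c * k / 8) ^ 2 by rw [div_pow, mul_pow, sq_sqrt hc]; ring]
    exact sqrt_sq (by positivity)
  calc _ ≤ 2 * L * √(m : ℝ) := sum_range_mul_pval_le hL m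
    _ = L * √c * k / 4 := by rw [hsqrt]; ring

lemma le_sum_Ico_pval_of_le {L m₁ m₂ : ℕ} {c k α : ℝ} (hL : 0 < L) (hα0 : 0 ≤ α) (hα1 : α ≤ 1)
    (hc : 0 ≤ c) (hk : 0 ≤ k) (hm : m₁ ≤ m₂) (hm₁ : (m₁ : ℝ) = c / 64 * k ^ 2)
    (hm₂ : c * k ^ 2 ≤ α ^ 2 * m₂) :
    L * (7 / 4 * √c * k - 2) ≤ α * ∑ r ∈ Ico (m₁ * L) ((m₂ + 1) * L), pval L r := by
  set M : ℝ := ((m₂ + 1 : ℕ) : ℝ) + 1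
  have hsplit := sum_range_add_sum_Ico (pval L) (Nat.mul_le_mul_right L (by omega : m₁ ≤ m₂ + 1))
  have hupper := sum_range_pval_le_of_eq hL hc hk hm₁
  have hlower := le_sum_range_mul_pval hL (m₂ + 1)
  have hkey : √c * k ≤ α * √M :=
    calc √c * k = √(c * k ^ 2) := by rw [sqrt_mul hc, sqrt_sq hk]
      _ ≤ √(α ^ 2 * m₂) := sqrt_le_sqrt hm₂
      _ = α * √m₂ := by rw [sqrt_mul (sq_nonneg _), sqrt_sq hα0]
      _ ≤ α * √M := mul_le_mul_of_nonneg_left (sqrt_le_sqrt (by simp [M]; linarith)) hα0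
  have hL0 : (0 : ℝ) ≤ L := L.cast_nonneg
  nlinarith [mul_le_mul_of_nonneg_left hkey hL0, mul_nonneg (sub_nonneg.2 hα1)
    (by positivity : (0 : ℝ) ≤ 2 * L + L * √c * k / 4)]

lemma two_mul_log_le_eight_mul_sqrt_sqrt {c : ℝ} (hc : 0 ≤ c) : 2 * log c ≤ 8 * √√c := by
  have h := log_le_rpow_div (sqrt_nonneg c) (by norm_num : (0 : ℝ) < 1 / 2)
  rw [← sqrt_eq_rpow, log_sqrt hc] at h
  linarith

lemma log_four_div_le {α k : ℝ} (hk : 2 ≤ k) (hα : exp (-k) < α) : log (4 / α) ≤ 17 / 10 * k := by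
  have hα0 : 0 < α := (exp_pos _).trans hα
  have hlogα : -k < log α := by simpa using log_lt_log (exp_pos _) hα
  have hlog4 : log 4 ≤ 7 / 5 := by
    rw [show (4 : ℝ) = 2 ^ 2 by norm_num, log_pow]
    linarith [log_two_lt_d9]
  rw [log_div (by norm_num) hα0.ne']
  linarith

lemma log_target_le {c α k L n : ℝ} (hc : 10 ^ 6 ≤ c) (hk : 2 ≤ k) (hL : 1 ≤ L) (hn : 1 ≤ n)
    (hLn : log n ≤ L) (hα : exp (-k) < α) :
    8 * log (4 / α) * log n + 2 * log c ≤ L * (7 / 4 * √c * k - 2) / 6 := by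
  have hs : 1000 ≤ √c := (le_sqrt (by norm_num) (by linarith)).2 (by linarith)
  have hs' : 31 ≤ √√c := (le_sqrt (by norm_num) (by linarith)).2 (by linarith)
  have hss : 31 * √√c ≤ √c := by nlinarith [mul_self_sqrt (sqrt_nonneg c)]
  have hα4 := log_four_div_le hk hα
  have hlogc := two_mul_log_le_eight_mul_sqrt_sqrt (by linarith : (0 : ℝ) ≤ c)
  have hkL : 2 ≤ k * L := by nlinarith
  nlinarith [mul_le_mul_of_nonneg_right hα4 (log_nonneg hn),
    mul_le_mul_of_nonneg_left hLn (by linarith : (0 : ℝ) ≤ 17 / 10 * k),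
    mul_nonneg (by linarith : (0 : ℝ) ≤ k * L) (by linarith : (0 : ℝ) ≤ √c - 1000),
    mul_nonneg (by linarith : (0 : ℝ) ≤ √c) (by linarith : (0 : ℝ) ≤ k * L - 2)]

lemma exp_neg_le_div_sq_mul_rpow {c n y B : ℝ} (hc : 0 < c) (hn : 0 < n)
    (h : y * log n + 2 * log c ≤ B) : exp (-B) ≤ 2 / c ^ 2 * n ^ (-y) := by
  calc exp (-B) ≤ exp (log 2 - log (c ^ 2) + log n * (-y)) := by
        rw [log_pow]; push_cast
        exact exp_le_exp.2 (by nlinarith [log_pos one_lt_two])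
    _ = 2 / c ^ 2 * n ^ (-y) := by
        rw [exp_add, exp_sub, exp_log two_pos, exp_log (by positivity), rpow_def_of_pos hn]

/-- Failure probability of the Weight Inequality: there is an absolute constant `c₀`
such that for all `c ≥ c₀`, for a random column `X` of length `t ≥ (m2+1)·L` with
independent Bernoulli(`p(r)`) coordinates, with `Y⊤` the weight of `[0, m1·L)` and
`Y⊥` the weight of `[m1·L, (m2+1)·L)`, we have
`P(Y⊤ > α·Y⊥) ≤ (2/c²)·n^{−8·ln(4/α)}`. -/
theorem stmt13 :
    ∃ c₀ : ℝ, ∀ c : ℝ, c₀ ≤ c →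
      ∀ n : ℕ, 2 ≤ n → ∀ α ε : ℝ, 0 < α → α ≤ 1 → 0 < ε →
        ∀ k : ℕ, 1 < k → k ≤ n → Real.exp (-(k : ℝ)) < α →
          ∀ L : ℕ, 0 < L → Real.log n ≤ (L : ℝ) →
            ∀ m1 m2 : ℕ, 0 < m1 → 0 < m2 →
              (m1 : ℝ) = c / 64 * (k : ℝ) ^ 2 →
              (m2 : ℝ) = c / α ^ ((2 : ℝ) + ε) * (k : ℝ) ^ 2 →
              ∀ t : ℕ, (m2 + 1) * L ≤ t →
                (Measure.pi fun r : Fin t => bern (pval L r.val))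
                    {ω : Fin t → Bool |
                      α * ∑ r : Fin t,
                          (if m1 * L ≤ r.val ∧ r.val < (m2 + 1) * L ∧ ω r = true
                            then (1 : ℝ) else 0)
                        < ∑ r : Fin t,
                            (if r.val < m1 * L ∧ ω r = true then (1 : ℝ) else 0)}
                  ≤ ENNReal.ofReal
                      (2 / c ^ 2 * (n : ℝ) ^ (-(8 * Real.log (4 / α)))) := by
  refine ⟨10 ^ 6, fun c hc n hn α ε hα hα1 hε k hk _ hkα L hL hLn m1 m2 hm1 _ hm1c hm2c t ht => ?_⟩
  have hc0 : 0 < c := by linarith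
  have hk0 : (0 : ℝ) ≤ k := k.cast_nonneg
  have hm2 : c * k ^ 2 ≤ α ^ 2 * m2 := by
    rw [hm2c, div_mul_eq_mul_div]
    exact le_sq_mul_div_rpow hα hα1 hε.le (by positivity)
  have hm12 : m1 ≤ m2 := by
    have hα2 : α ^ 2 ≤ 1 := pow_le_one₀ hα.le hα1
    have : (m1 : ℝ) ≤ m2 := by nlinarith [mul_le_mul_of_nonneg_right hα2 m2.cast_nonneg]
    exact_mod_cast this
  have hA := sum_range_pval_le_of_eq hL hc0.le hk0 hm1c
  have hB := le_sum_Ico_pval_of_le hL hα.le hα1 hc0.le hk0 hm12 hm1c hm2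
  set A := ∑ r ∈ range (m1 * L), pval L r
  set B := ∑ r ∈ Ico (m1 * L) ((m2 + 1) * L), pval L r
  have hApos : 0 < A :=
    sum_pos (fun r _ => pval_pos L r) (nonempty_range_iff.2 (Nat.mul_pos hm1 hL).ne')
  have h6A : 6 * A ≤ α * B := by
    have hsk : 8 ≤ √c * k := by
      nlinarith [(le_sqrt (by norm_num) hc0.le).2 (by linarith : (8 : ℝ) ^ 2 ≤ c),
        (by exact_mod_cast hk : (1 : ℝ) < k)]
    nlinarith [mul_le_mul_of_nonneg_left hsk (L.cast_nonneg (α := ℝ))]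
  obtain ⟨l, hl, hexp⟩ :=
    exists_pos_tilt_le hApos (sum_nonneg fun r _ => (pval_pos L r).le) hα hα1 h6A
  have hlog := log_target_le hc (by exact_mod_cast hk) (by exact_mod_cast hL)
    (by exact_mod_cast (by omega : 1 ≤ n)) hLn hkα
  calc _ ≤ ENNReal.ofReal (exp (A * (exp l - 1) + B * (exp (-(α * l)) - 1))) :=
        measure_pi_bern_weight_gt_le (fun r => (pval_pos L r).le) (pval_le_one L)
          (Nat.mul_le_mul_right L (by omega)) ht hl.le
    _ ≤ _ := ENNReal.ofReal_le_ofReal <| (exp_le_exp.2 hexp).trans <|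
        exp_neg_le_div_sq_mul_rpow (y := 8 * log (4 / α)) hc0 (by positivity) (by linarith)
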